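/- Suppose $V : \mathbb{R}^n \to \mathbb{R}$ satisfies $V(x) \ge c\|x\|$ for all $x$ with $c > 0$, and a random sequence $x_t$ satisfies $\mathbb{E}[V(x_{t+1}) \mid x_t] - V(x_t) \le k' - k'' V(x_t)$ with $k' > 0$ and $0 < k'' \le 1$. Then $\limsup_{t\to\infty} \mathbb{E}[\|x_t\|] \le \frac{k'}{c\,k''}$. -/
import Mathlib


open MeasureTheory Filter

/-- Stochastic stability with a radially lower-bounded Lyapunov function. -/
theorem stmt13 {Ω : Type*} {m0 : MeasurableSpace Ω} (μ : Measure Ω) [IsProbabilityMeasure μ]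
    (n : ℕ) (V : EuclideanSpace ℝ (Fin n) → ℝ) (c : ℝ) (hc : 0 < c)
    (hV : ∀ x, c * ‖x‖ ≤ V x)
    (x : ℕ → Ω → EuclideanSpace ℝ (Fin n))
    (hmeas : ∀ t, Measurable (x t))
    (hint : ∀ t, Integrable (fun ω => V (x t ω)) μ)
    (hint' : ∀ t, Integrable (fun ω => ‖x t ω‖) μ)
    (k' k'' : ℝ) (hk' : 0 < k') (hk'' : 0 < k'') (hk''1 : k'' ≤ 1)
    (hdrift : ∀ t,
      μ[(fun ω => V (x (t + 1) ω)) | MeasurableSpace.comap (x t) inferInstance]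
        ≤ᵐ[μ] fun ω => V (x t ω) + k' - k'' * V (x t ω)) :
    limsup (fun t => ∫ ω, ‖x t ω‖ ∂μ) atTop ≤ k' / (c * k'') := by
  set a : ℕ → ℝ := fun t => ∫ ω, V (x t ω) ∂μ with ha
  set r : ℝ := 1 - k'' with hr
  have hr0 : 0 ≤ r := by simp [hr]; linarith
  have hr1 : r < 1 := by simp [hr]; linarith
  -- recurrence
  have hrec : ∀ t, a (t + 1) ≤ r * a t + k' := by
    intro t
    have hle : MeasurableSpace.comap (x t) inferInstance ≤ m0 :=
      (hmeas t).comap_le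
    have h1 : a (t + 1)
        = ∫ ω, (μ[(fun ω => V (x (t + 1) ω)) | MeasurableSpace.comap (x t) inferInstance]) ω ∂μ :=
      (integral_condExp hle).symm
    rw [h1]
    have h2 : ∫ ω, (μ[(fun ω => V (x (t + 1) ω)) | MeasurableSpace.comap (x t) inferInstance]) ω ∂μ
        ≤ ∫ ω, (V (x t ω) + k' - k'' * V (x t ω)) ∂μ := by
      refine integral_mono_ae integrable_condExp ?_ (hdrift t)
      exact (((hint t).add (integrable_const k')).sub ((hint t).const_mul k''))
    refine h2.trans ?_
    have hA : Integrable (fun ω => V (x t ω) + k') μ := (hint t).add (integrable_const k')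
    have hB : Integrable (fun ω => k'' * V (x t ω)) μ := (hint t).const_mul k''
    have : ∫ ω, (V (x t ω) + k' - k'' * V (x t ω)) ∂μ
        = a t + k' - k'' * a t := by
      rw [integral_sub hA hB, integral_add (hint t) (integrable_const k'),
        integral_const_mul, integral_const]
      simp [ha]
    rw [this]
    have : a t + k' - k'' * a t = r * a t + k' := by rw [hr]; ring
    linarith
  -- shifted sequence
  set M : ℝ := max (a 0 - k' / k'') 0 with hM
  clear_value a r M
  have hbd : ∀ t, a t - k' / k'' ≤ r ^ t * M := by
    intro t
    induction t with
    | zero =>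
        simp only [pow_zero, one_mul]
        have := le_max_left (a 0 - k' / k'') 0
        linarith
    | succ t ih =>
        have h1 : a (t + 1) - k' / k'' ≤ r * (a t - k' / k'') := by
          have := hrec t
          have hk : r * (k' / k'') + k' = k' / k'' := by
            rw [hr]; field_simp; ring
          have hms : r * (a t - k' / k'') = r * a t - r * (k' / k'') := by ring
          linarith
        calc a (t + 1) - k' / k'' ≤ r * (a t - k' / k'') := h1
          _ ≤ r * (r ^ t * M) := by exact mul_le_mul_of_nonneg_left ih hr0
          _ = r ^ (t + 1) * M := by ring
  -- bound on E‖x t‖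
  have hfa : ∀ t, ∫ ω, ‖x t ω‖ ∂μ ≤ (r ^ t * M + k' / k'') / c := by
    intro t
    have h1 : c * ∫ ω, ‖x t ω‖ ∂μ ≤ a t := by
      rw [← integral_const_mul, ha]
      exact integral_mono_ae ((hint' t).const_mul c) (hint t)
        (Filter.Eventually.of_forall fun ω => hV (x t ω))
    have h2 : a t ≤ r ^ t * M + k' / k'' := by have := hbd t; linarith
    rw [le_div_iff₀ hc]
    nlinarith
  -- limit of the bound
  have htend : Tendsto (fun t => (r ^ t * M + k' / k'') / c) atTop
      (nhds ((0 * M + k' / k'') / c)) := by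
    exact (((tendsto_pow_atTop_nhds_zero_of_lt_one hr0 hr1).mul_const M).add_const
      (k' / k'')).div_const c
  have hlim : (0 * M + k' / k'') / c = k' / (c * k'') := by
    rw [zero_mul, zero_add, div_div]
    ring_nf
  rw [← hlim]
  refine le_trans (Filter.limsup_le_limsup (Filter.Eventually.of_forall hfa) ?_ ?_) ?_
  · exact isCoboundedUnder_le_of_le atTop fun t => integral_nonneg fun ω => norm_nonneg _
  · exact htend.isBoundedUnder_le
  · exact le_of_eq htend.limsup_eq
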